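/- The degenerate Fubini polynomials F_{n,λ}(x) := Σ_{k=0}^n k! {n brace k}_λ x^k have exponential generating function 1/(1 − x(e_λ(t) − 1)) = Σ_{n=0}^∞ F_{n,λ}(x) t^n/n! as formal power series in t. -/

import Mathlib

open PowerSeries

/-- The degenerate falling factorial `(x)_{n,λ}`. -/
def degFall (lam x : ℝ) (n : ℕ) : ℝ := ∏ i ∈ Finset.range n, (x - i * lam)

/-- The ordinary falling factorial `(x)_k`. -/
def fallF (x : ℝ) (k : ℕ) : ℝ := ∏ i ∈ Finset.range k, (x - i)

/-- The degenerate exponential `e_λ(t) = Σ_{m≥0} (1)_{m,λ} t^m/m!`. -/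
noncomputable def degExpP (lam y : ℝ) : PowerSeries ℝ :=
  PowerSeries.mk fun m => degFall lam y m / (Nat.factorial m)

/-! Since `(y + z)_{n,λ}` satisfies the Vandermonde identity, `e_λ(y) e_λ(z) = e_λ(y + z)`, hence
`e_λ(1)^j = e_λ(j)`. Expanding `(1 + (e_λ(1) - 1))^j` binomially and comparing `t^n`-coefficients
with `(j)_{n,λ} = Σ_k {n brace k}_λ k! C(j, k)` identifies the binomial transforms of
`k ↦ [t^n] (e_λ(1) - 1)^k` and `k ↦ k! {n brace k}_λ / n!`; the transform is unitriangular, so the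
two sequences agree. The theorem is then the geometric series for `1 / (1 - x (e_λ(t) - 1))`,
whose ratio has no constant term. -/

open Finset

namespace PowerSeries

theorem coeff_inv_one_sub_eq_sum {k : Type*} [Field k] {u : k⟦X⟧} (hu : constantCoeff u = 0)
    (n : ℕ) : coeff n (1 - u)⁻¹ = ∑ i ∈ range (n + 1), coeff n (u ^ i) := by
  have hunit : constantCoeff (1 - u) ≠ 0 := by simp [hu]
  have hsplit : (1 - u)⁻¹ = ∑ i ∈ range (n + 1), u ^ i + u ^ (n + 1) * (1 - u)⁻¹ := by
    calc (1 - u)⁻¹ = ((1 - u) * ∑ i ∈ range (n + 1), u ^ i + u ^ (n + 1)) * (1 - u)⁻¹ := by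
          rw [mul_neg_geom_sum, sub_add_cancel, one_mul]
      _ = _ := by rw [add_mul, mul_comm (1 - u), mul_assoc, PowerSeries.mul_inv_cancel _ hunit,
          mul_one]
  have hX : X ^ (n + 1) ∣ u ^ (n + 1) * (1 - u)⁻¹ :=
    (pow_dvd_pow_of_dvd (X_dvd_iff.mpr hu) _).mul_right _
  rw [hsplit, map_add, X_pow_dvd_iff.mp hX n n.lt_succ_self, add_zero, map_sum]

end PowerSeries

theorem eq_of_forall_sum_range_choose_mul_eq {R : Type*} [Ring R] {a b : ℕ → R}
    (h : ∀ j, ∑ m ∈ range (j + 1), (j.choose m : R) * a m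
      = ∑ m ∈ range (j + 1), (j.choose m : R) * b m) : a = b := by
  funext j
  induction j using Nat.strong_induction_on with
  | _ j ih =>
    have hj := h j
    rw [sum_range_succ, sum_range_succ, sum_congr rfl fun m hm => by rw [ih m (mem_range.1 hm)],
      Nat.choose_self, Nat.cast_one, one_mul, one_mul] at hj
    exact add_left_cancel hj

theorem sum_range_choose_mul_eq_of_eq_zero {R : Type*} [Semiring R] {b : ℕ → R} {n : ℕ}
    (hb : ∀ m, n < m → b m = 0) (j : ℕ) :
    ∑ m ∈ range (j + 1), (j.choose m : R) * b m = ∑ m ∈ range (n + 1), (j.choose m : R) * b m := by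
  have hj : range (j + 1) ⊆ range (j + n + 1) := range_subset_range.2 (by omega)
  have hn : range (n + 1) ⊆ range (j + n + 1) := range_subset_range.2 (by omega)
  refine (sum_subset hj fun m _ hm => ?_).trans (sum_subset hn fun m _ hm => ?_).symm
  · rw [Nat.choose_eq_zero_of_lt (by simpa using hm), Nat.cast_zero, zero_mul]
  · rw [hb m (by simpa using hm), mul_zero]

lemma degFall_succ (lam y : ℝ) (n : ℕ) :
    degFall lam y (n + 1) = degFall lam y n * (y - n * lam) :=
  prod_range_succ _ _

lemma degFall_zero_succ (lam : ℝ) (n : ℕ) : degFall lam 0 (n + 1) = 0 :=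
  prod_eq_zero (mem_range.2 n.succ_pos) (by simp)

lemma fallF_natCast (j m : ℕ) : fallF j m = m.factorial * j.choose m := by
  rw [fallF, ← descPochhammer_eval_eq_prod_range, descPochhammer_eval_eq_descFactorial,
    Nat.descFactorial_eq_factorial_mul_choose, Nat.cast_mul]

theorem degFall_add (lam y z : ℝ) (n : ℕ) :
    degFall lam (y + z) n =
      ∑ p ∈ antidiagonal n, (n.choose p.1 : ℝ) * (degFall lam y p.1 * degFall lam z p.2) := by
  induction n with
  | zero => simp [degFall]
  | succ n ih =>
    rw [degFall_succ, ih, sum_mul,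
      sum_antidiagonal_choose_succ_mul (fun i j => degFall lam y i * degFall lam z j),
      ← sum_add_distrib]
    refine sum_congr rfl fun ⟨i, j⟩ hij => ?_
    rw [HasAntidiagonal.mem_antidiagonal] at hij
    rw [Nat.choose_symm_of_eq_add hij.symm, degFall_succ, degFall_succ, ← hij]
    push_cast
    ring

theorem degExpP_mul (lam y z : ℝ) : degExpP lam y * degExpP lam z = degExpP lam (y + z) := by
  ext n
  simp only [coeff_mul, degExpP, coeff_mk]
  rw [degFall_add, sum_div]
  refine sum_congr rfl fun ⟨i, j⟩ hij => ?_
  rw [HasAntidiagonal.mem_antidiagonal] at hij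
  subst hij
  rw [Nat.cast_add_choose]
  field_simp

theorem degExpP_zero (lam : ℝ) : degExpP lam 0 = 1 := by
  ext (_ | n)
  · simp [degExpP, degFall]
  · simp [degExpP, degFall_zero_succ]

theorem degExpP_one_pow (lam : ℝ) (j : ℕ) : degExpP lam 1 ^ j = degExpP lam j := by
  induction j with
  | zero => simp [degExpP_zero]
  | succ j ih => rw [pow_succ, ih, degExpP_mul, Nat.cast_succ]

theorem constantCoeff_degExpP_sub_one (lam : ℝ) : constantCoeff (degExpP lam 1 - 1) = 0 := by
  simp [degExpP, degFall]

theorem coeff_degExpP_sub_one_pow {lam : ℝ} {S : ℕ → ℕ → ℝ}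
    (hS : ∀ (n : ℕ) (z : ℝ),
      degFall lam z n = ∑ k ∈ Finset.range (n + 1), S n k * fallF z k) (n k : ℕ) :
    coeff n ((degExpP lam 1 - 1) ^ k) =
      if k ≤ n then k.factorial * S n k / n.factorial else 0 := by
  set b : ℕ → ℝ := fun k => if k ≤ n then k.factorial * S n k / n.factorial else 0
  suffices (fun k => coeff n ((degExpP lam 1 - 1) ^ k)) = b from congrFun this k
  refine eq_of_forall_sum_range_choose_mul_eq fun j => ?_
  have hb : ∀ m, n < m → b m = 0 := fun m hm => if_neg (by omega)
  calc ∑ m ∈ range (j + 1), (j.choose m : ℝ) * coeff n ((degExpP lam 1 - 1) ^ m)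
      = coeff n (degExpP lam 1 ^ j) := by
        rw [← sub_add_cancel (degExpP lam 1) 1, add_pow, map_sum, sub_add_cancel]
        refine sum_congr rfl fun m _ => ?_
        rw [one_pow, mul_one, ← map_natCast (C (R := ℝ)), coeff_mul_C, mul_comm]
    _ = degFall lam j n / n.factorial := by rw [degExpP_one_pow, degExpP, coeff_mk]
    _ = ∑ m ∈ range (n + 1), (j.choose m : ℝ) * b m := by
        rw [hS, sum_div]
        refine sum_congr rfl fun m hm => ?_
        rw [fallF_natCast, show b m = _ from if_pos (Nat.lt_succ_iff.mp (mem_range.mp hm))]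
        ring
    _ = ∑ m ∈ range (j + 1), (j.choose m : ℝ) * b m :=
        (sum_range_choose_mul_eq_of_eq_zero hb j).symm

/-- The degenerate Fubini polynomials `F_{n,λ}(x) = Σ_{k=0}^n k! {n brace k}_λ x^k`
have exponential generating function `1/(1 − x(e_λ(t) − 1)) = Σ_n F_{n,λ}(x) t^n/n!`,
where the degenerate Stirling numbers `S n k = {n brace k}_λ` are defined by
`(x)_{n,λ} = Σ_k S n k (x)_k`. -/
theorem stmt7 (lam x : ℝ) (S : ℕ → ℕ → ℝ)
    (hS : ∀ (n : ℕ) (z : ℝ),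
      degFall lam z n = ∑ k ∈ Finset.range (n + 1), S n k * fallF z k) :
    (1 - PowerSeries.C x * (degExpP lam 1 - 1))⁻¹ =
      PowerSeries.mk fun n =>
        (∑ k ∈ Finset.range (n + 1), (Nat.factorial k : ℝ) * S n k * x ^ k) /
          (Nat.factorial n) := by
  have hu : constantCoeff (C x * (degExpP lam 1 - 1)) = 0 := by
    rw [map_mul, constantCoeff_degExpP_sub_one, mul_zero]
  ext n
  rw [coeff_inv_one_sub_eq_sum hu, coeff_mk, sum_div]
  refine sum_congr rfl fun k hk => ?_
  rw [mul_pow, ← map_pow, coeff_C_mul, coeff_degExpP_sub_one_pow hS,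
    if_pos (Nat.lt_succ_iff.mp (mem_range.mp hk))]
  ring
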